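/- arXiv:0705.1948 — 3 statements merged into one kernel-verified Lean document; each statement's English description precedes it below -/
import Mathlib

section
/- Let 1 < q' < ∞ and let Γ = {(z,t) ∈ ℝⁿ×(0,∞) : |z| < t} be equipped with the measure dz dt/t^{n+1}. Then there is a constant C (depending on n, q') such that for all x ∈ ℝⁿ and s > 0, ∫_Γ (s·t)^{q'}/(s+t+|x|)^{(n+2)q'} · dz dt/t^{n+1} ≤ C · s^{q'}/(s+|x|)^{(n+1)q'}. -/
open MeasureTheory

/-- The cone `Γ = {(z,t) ∈ ℝⁿ×(0,∞) : |z| < t}`. -/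
def cone (n : ℕ) : Set (EuclideanSpace ℝ (Fin n) × ℝ) := {p | ‖p.1‖ < p.2}

/-- The measure `dz dt / t^{n+1}` on `ℝⁿ × ℝ`. -/
noncomputable def coneMeasure (n : ℕ) : Measure (EuclideanSpace ℝ (Fin n) × ℝ) :=
  volume.withDensity (fun p => ENNReal.ofReal (p.2 ^ (-((n : ℝ) + 1))))

/-!
Slicing the cone at height `t` gives a ball of volume `t ^ n * |B₁|`, so against the density
`t ^ (-(n+1))` the integral collapses to `|B₁| s ^ q' ∫₀^∞ t ^ (q'-1) / (A + t) ^ M dt` with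
`A = s + |x|` and `M = (n+2) q'`. Splitting at `t = A` and bounding `A + t` below by `A` on `(0, A]`
and by `t` on `(A, ∞)` bounds the last integral by `(1/q' + 1/(M - q')) A ^ (q' - M)`, and
`q' - M = -(n+1) q'`.
-/

open Set Metric
open scoped ENNReal

lemma lintegral_Ioc_rpow_div_add_rpow_le {a M A : ℝ} (ha : 0 < a) (hM : 0 ≤ M) (hA : 0 < A) :
    ∫⁻ t in Ioc 0 A, ENNReal.ofReal (t ^ (a - 1) / (A + t) ^ M)
      ≤ ENNReal.ofReal (A ^ (a - M) / a) := by
  have hint : IntegrableOn (fun t : ℝ => A ^ (-M) * t ^ (a - 1)) (Ioc 0 A) :=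
    ((intervalIntegrable_iff_integrableOn_Ioc_of_le hA.le).1
      (intervalIntegral.intervalIntegrable_rpow' (by linarith))).const_mul _
  calc ∫⁻ t in Ioc 0 A, ENNReal.ofReal (t ^ (a - 1) / (A + t) ^ M)
      ≤ ∫⁻ t in Ioc 0 A, ENNReal.ofReal (A ^ (-M) * t ^ (a - 1)) := by
        refine setLIntegral_mono (by fun_prop) fun t ⟨ht, _⟩ => ENNReal.ofReal_le_ofReal ?_
        rw [div_eq_inv_mul, Real.rpow_neg hA.le]
        gcongr
        linarith
    _ = ENNReal.ofReal (∫ t in (0)..A, A ^ (-M) * t ^ (a - 1)) := by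
        rw [intervalIntegral.integral_of_le hA.le, ofReal_integral_eq_lintegral_ofReal hint]
        filter_upwards [ae_restrict_mem measurableSet_Ioc] with t ht
        exact mul_nonneg (Real.rpow_nonneg hA.le _) (Real.rpow_nonneg ht.1.le _)
    _ = ENNReal.ofReal (A ^ (a - M) / a) := by
        rw [intervalIntegral.integral_const_mul, integral_rpow (Or.inl (by linarith)),
          sub_add_cancel, Real.zero_rpow ha.ne', sub_zero, Real.rpow_sub hA, Real.rpow_neg hA.le]
        ring_nf

lemma lintegral_Ioi_self_rpow_div_add_rpow_le {a M A : ℝ} (haM : a < M) (hM : 0 ≤ M) (hA : 0 < A) :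
    ∫⁻ t in Ioi A, ENNReal.ofReal (t ^ (a - 1) / (A + t) ^ M)
      ≤ ENNReal.ofReal (A ^ (a - M) / (M - a)) := by
  calc ∫⁻ t in Ioi A, ENNReal.ofReal (t ^ (a - 1) / (A + t) ^ M)
      ≤ ∫⁻ t in Ioi A, ENNReal.ofReal (t ^ (a - 1 - M)) := by
        refine setLIntegral_mono (by fun_prop) fun t (ht : A < t) => ENNReal.ofReal_le_ofReal ?_
        have ht0 : 0 < t := hA.trans ht
        rw [Real.rpow_sub ht0 (a - 1) M]
        gcongr
        linarith
    _ = ENNReal.ofReal (∫ t in Ioi A, t ^ (a - 1 - M)) := by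
        rw [ofReal_integral_eq_lintegral_ofReal (integrableOn_Ioi_rpow_of_lt (by linarith) hA)]
        filter_upwards [ae_restrict_mem measurableSet_Ioi] with t ht
        exact Real.rpow_nonneg (hA.trans ht).le _
    _ = ENNReal.ofReal (A ^ (a - M) / (M - a)) := by
        rw [integral_Ioi_rpow_of_lt (by linarith) hA, show a - 1 - M + 1 = a - M by ring,
          show M - a = -(a - M) by ring, div_neg, neg_div]

lemma lintegral_Ioi_zero_rpow_div_add_rpow_le {a M A : ℝ} (ha : 0 < a) (haM : a < M) (hA : 0 < A) :
    ∫⁻ t in Ioi 0, ENNReal.ofReal (t ^ (a - 1) / (A + t) ^ M)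
      ≤ ENNReal.ofReal ((1 / a + 1 / (M - a)) * A ^ (a - M)) := by
  have hM : 0 ≤ M := by linarith
  rw [← Ioc_union_Ioi_eq_Ioi hA.le, lintegral_union measurableSet_Ioi Ioc_disjoint_Ioi_same]
  calc _ ≤ ENNReal.ofReal (A ^ (a - M) / a) + ENNReal.ofReal (A ^ (a - M) / (M - a)) :=
        add_le_add (lintegral_Ioc_rpow_div_add_rpow_le ha hM hA)
          (lintegral_Ioi_self_rpow_div_add_rpow_le haM hM hA)
    _ = ENNReal.ofReal ((1 / a + 1 / (M - a)) * A ^ (a - M)) := by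
        have : 0 < M - a := by linarith
        rw [← ENNReal.ofReal_add (by positivity) (by positivity)]
        ring_nf

lemma lintegral_setOf_norm_lt_snd {E : Type*} [NormedAddCommGroup E] [MeasurableSpace E]
    [OpensMeasurableSpace E] (μ : Measure E) [SFinite μ] {g : ℝ → ℝ≥0∞} (hg : Measurable g) :
    ∫⁻ p in {p : E × ℝ | ‖p.1‖ < p.2}, g p.2 ∂(μ.prod volume) = ∫⁻ t, μ (ball 0 t) * g t := by
  have hmeas : MeasurableSet {p : E × ℝ | ‖p.1‖ < p.2} :=
    measurableSet_lt measurable_fst.norm measurable_snd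
  rw [← lintegral_indicator hmeas,
    lintegral_prod_symm' _ (Measurable.indicator (by fun_prop) hmeas)]
  congr 1 with t
  have hslice : ∀ z : E, {p : E × ℝ | ‖p.1‖ < p.2}.indicator (fun p => g p.2) (z, t)
      = (ball (0 : E) t).indicator (fun _ => g t) z := fun z => by
    simp [Set.indicator]
  simp_rw [hslice, lintegral_indicator_const measurableSet_ball, mul_comm]

lemma measurableSet_cone (n : ℕ) : MeasurableSet (cone n) :=
  measurableSet_lt measurable_fst.norm measurable_snd

lemma lintegral_cone_comp_snd (n : ℕ) {g : ℝ → ℝ≥0∞} (hg : Measurable g) :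
    ∫⁻ p in cone n, g p.2 ∂coneMeasure n
      = volume (ball (0 : EuclideanSpace ℝ (Fin n)) 1) *
          ∫⁻ t in Ioi 0, ENNReal.ofReal t⁻¹ * g t := by
  rw [coneMeasure, restrict_withDensity (measurableSet_cone n),
    lintegral_withDensity_eq_lintegral_mul _ (by fun_prop) (by fun_prop), Measure.volume_eq_prod]
  refine (lintegral_setOf_norm_lt_snd volume
    (g := fun t => ENNReal.ofReal (t ^ (-((n : ℝ) + 1))) * g t) (by fun_prop)).trans ?_
  have hg' : Measurable fun t : ℝ => ENNReal.ofReal t⁻¹ * g t := by fun_prop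
  rw [← lintegral_indicator measurableSet_Ioi,
    ← lintegral_const_mul _ (hg'.indicator measurableSet_Ioi)]
  congr 1 with t
  rcases le_or_gt t 0 with ht | ht
  · simp [ball_eq_empty.2 ht, not_lt.2 ht]
  · have hpow : ENNReal.ofReal (t ^ n) * ENNReal.ofReal (t ^ (-((n : ℝ) + 1)))
        = ENNReal.ofReal t⁻¹ := by
      rw [← ENNReal.ofReal_mul (by positivity), ← Real.rpow_natCast, ← Real.rpow_add ht,
        ← Real.rpow_neg_one]
      ring_nf
    rw [indicator_of_mem (show t ∈ Ioi 0 from ht), Measure.addHaar_ball_of_pos _ _ ht,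
      finrank_euclideanSpace_fin, mul_comm _ (volume _), mul_assoc, ← mul_assoc (ENNReal.ofReal _),
      hpow]

lemma inv_mul_mul_rpow_div_add_rpow {a M s t r : ℝ} (hs : 0 ≤ s) (ht : 0 < t) :
    t⁻¹ * ((s * t) ^ a / (s + t + r) ^ M) = s ^ a * (t ^ (a - 1) / (s + r + t) ^ M) := by
  rw [Real.mul_rpow hs ht.le, Real.rpow_sub_one ht.ne', add_right_comm]
  ring

lemma lintegral_cone_rpow_div_le (n : ℕ) {q' : ℝ} (hq : 0 < q') (x : EuclideanSpace ℝ (Fin n))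
    {s : ℝ} (hs : 0 < s) :
    ∫⁻ p in cone n, ENNReal.ofReal ((s * p.2) ^ q' / (s + p.2 + ‖x‖) ^ (((n : ℝ) + 2) * q'))
        ∂coneMeasure n
      ≤ ENNReal.ofReal (volume.real (ball (0 : EuclideanSpace ℝ (Fin n)) 1) *
          (1 / q' + 1 / (((n : ℝ) + 1) * q')) * s ^ q' / (s + ‖x‖) ^ (((n : ℝ) + 1) * q')) := by
  set M := ((n : ℝ) + 2) * q'
  set V := volume.real (ball (0 : EuclideanSpace ℝ (Fin n)) 1)
  have hMq : M - q' = ((n : ℝ) + 1) * q' := by ring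
  have hqM : q' < M := by nlinarith [(n.cast_nonneg : (0 : ℝ) ≤ n)]
  have hA : 0 < s + ‖x‖ := by positivity
  calc ∫⁻ p in cone n, ENNReal.ofReal ((s * p.2) ^ q' / (s + p.2 + ‖x‖) ^ M) ∂coneMeasure n
      = ENNReal.ofReal V * ∫⁻ t in Ioi 0,
          ENNReal.ofReal t⁻¹ * ENNReal.ofReal ((s * t) ^ q' / (s + t + ‖x‖) ^ M) := by
        rw [lintegral_cone_comp_snd n
          (g := fun t => ENNReal.ofReal ((s * t) ^ q' / (s + t + ‖x‖) ^ M)) (by fun_prop),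
          ofReal_measureReal]
    _ = ENNReal.ofReal V * ∫⁻ t in Ioi 0,
          ENNReal.ofReal (s ^ q') * ENNReal.ofReal (t ^ (q' - 1) / (s + ‖x‖ + t) ^ M) := by
        refine congrArg _ (setLIntegral_congr_fun measurableSet_Ioi fun t (ht : 0 < t) => ?_)
        rw [← ENNReal.ofReal_mul (by positivity), ← ENNReal.ofReal_mul (by positivity),
          inv_mul_mul_rpow_div_add_rpow hs.le ht]
    _ ≤ ENNReal.ofReal V * (ENNReal.ofReal (s ^ q') *
          ENNReal.ofReal ((1 / q' + 1 / (M - q')) * (s + ‖x‖) ^ (q' - M))) := by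
        rw [lintegral_const_mul _ (by fun_prop)]
        gcongr
        exact lintegral_Ioi_zero_rpow_div_add_rpow_le hq hqM hA
    _ = _ := by
        rw [← ENNReal.ofReal_mul (by positivity), ← ENNReal.ofReal_mul (by positivity),
          show q' - M = -(((n : ℝ) + 1) * q') by ring, Real.rpow_neg hA.le, hMq]
        ring_nf

/-- `∫_Γ (s·t)^{q'}/(s+t+|x|)^{(n+2)q'} dz dt/t^{n+1} ≤ C · s^{q'}/(s+|x|)^{(n+1)q'}`. -/
theorem cone_integral_bound (n : ℕ) (q' : ℝ) (hq' : 1 < q') :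
    ∃ C : ℝ, 0 < C ∧ ∀ (x : EuclideanSpace ℝ (Fin n)) (s : ℝ), 0 < s →
      (∫ p in cone n, (s * p.2) ^ q' / (s + p.2 + ‖x‖) ^ (((n : ℝ) + 2) * q')
          ∂(coneMeasure n)) ≤
        C * s ^ q' / (s + ‖x‖) ^ (((n : ℝ) + 1) * q') := by
  have hq : 0 < q' := by linarith
  have hV : 0 < volume.real (ball (0 : EuclideanSpace ℝ (Fin n)) 1) :=
    ENNReal.toReal_pos (measure_ball_pos _ _ one_pos).ne' measure_ball_lt_top.ne
  refine ⟨volume.real (ball (0 : EuclideanSpace ℝ (Fin n)) 1) * (1 / q' + 1 / (((n : ℝ) + 1) * q')),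
    by positivity, fun x s hs => ?_⟩
  rw [integral_eq_lintegral_of_nonneg_ae ?_ (Measurable.aestronglyMeasurable (by fun_prop))]
  · exact ENNReal.toReal_le_of_le_ofReal (by positivity) (lintegral_cone_rpow_div_le n hq x hs)
  · filter_upwards [ae_restrict_mem (measurableSet_cone n)] with p (hp : ‖p.1‖ < p.2)
    have : 0 < p.2 := (norm_nonneg _).trans_lt hp
    positivity
end

section
/- Let a₁,...,a_N be elements of a Banach space B, 1 < q < ∞, and f(z) = Σ_k a_k z^{2^k} for z in the unit disc D. Then ∫_D (1−|z|)^{q−1} ‖f(z)‖^q dA(z) ≥ c Σ_k 2^{−qk} ‖a_k‖^q for a universal constant c > 0 (depending only on q). -/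
/-!
Integrate in polar coordinates. On the circle of radius `r`, `f(r e^{iθ})` is a trigonometric
polynomial whose `2^k`-th Fourier coefficient is `r^{2^k} a_k`; pairing with a norming functional
of `a_k` (Hahn–Banach) and applying Jensen gives `∫ ‖f(r e^{iθ})‖^q dθ ≥ 2π (r^{2^k} ‖a_k‖)^q`.
On the annulus `1 - 2^{-k-1} ≤ r ≤ 1 - 2^{-k-2}` Bernoulli's inequality gives `r^{2^k} ≥ 1/2`
while `1 - r ≥ 2^{-k-2}`, so the `k`-th annulus alone contributes `≳ 2^{-qk} ‖a_k‖^q` to the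
integral, and these annuli are disjoint.
-/

open MeasureTheory Set Real Complex

theorem integral_exp_int_mul_I (m : ℤ) :
    ∫ θ in (-π)..π, exp (m * θ * I) = if m = 0 then (2 * π : ℂ) else 0 := by
  split_ifs with hm
  · simp [hm]; ring
  have hc : (m : ℂ) * I ≠ 0 := mul_ne_zero (Int.cast_ne_zero.mpr hm) I_ne_zero
  have hperiod : exp (m * I * π) = exp (m * I * (-π : ℝ)) := by
    rw [← mul_one (exp (_ * ((-π : ℝ) : ℂ))), ← exp_int_mul_two_pi_mul_I m, ← Complex.exp_add]
    push_cast
    ring_nf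
  simp_rw [mul_right_comm _ _ I]
  rw [integral_exp_mul_complex hc, hperiod, sub_self, zero_div]

theorem rpow_intervalIntegral_le {f : ℝ → ℝ} {a b q : ℝ} (hab : a < b) (hq : 1 ≤ q)
    (hf : ContinuousOn f (Icc a b)) (hf0 : ∀ x ∈ Icc a b, 0 ≤ f x) :
    (∫ x in a..b, f x) ^ q ≤ (b - a) ^ (q - 1) * ∫ x in a..b, f x ^ q := by
  have hba : 0 < b - a := sub_pos.mpr hab
  have hjensen := (convexOn_rpow hq).map_set_average_le (μ := volume) (t := Ioc a b) (f := f)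
    (continuous_rpow_const (by linarith)).continuousOn isClosed_Ici (by simp [hab]) (by simp)
    (ae_restrict_of_forall_mem measurableSet_Ioc fun x hx ↦ hf0 x (Ioc_subset_Icc_self hx))
    (hf.integrableOn_Icc.mono_set Ioc_subset_Icc_self)
    ((hf.rpow_const fun _ _ ↦ Or.inr (by linarith)).integrableOn_Icc.mono_set Ioc_subset_Icc_self)
  simp only [setAverage_eq, Real.volume_real_Ioc_of_le hab.le, smul_eq_mul,
    ← intervalIntegral.integral_of_le hab.le] at hjensen
  rw [mul_rpow (inv_nonneg.mpr hba.le) (intervalIntegral.integral_nonneg hab.le hf0),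
    inv_rpow hba.le, inv_mul_le_iff₀ (rpow_pos_of_pos hba q)] at hjensen
  refine hjensen.trans_eq ?_
  rw [rpow_sub_one hba.ne']
  ring

section FourierCoefficient

variable {E : Type*} [NormedAddCommGroup E] [NormedSpace ℂ E] {ι : Type*} {s : Finset ι}
  {n : ι → ℤ} {k : ι}

theorem two_pi_mul_norm_le_integral_norm_sum_exp (hn : InjOn n s) (c : ι → E) (hk : k ∈ s) :
    2 * π * ‖c k‖ ≤ ∫ θ in (-π)..π, ‖∑ j ∈ s, exp (n j * θ * I) • c j‖ := by
  obtain ⟨φ, hφ, hφk⟩ := exists_dual_vector'' ℂ (c k)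
  set F : ℝ → E := fun θ ↦ ∑ j ∈ s, exp (n j * θ * I) • c j
  have hF : Continuous F := by fun_prop
  have hπ : -π ≤ π := by linarith [pi_pos]
  have hcoeff : ∫ θ in (-π)..π, exp (-n k * θ * I) * φ (F θ) = 2 * π * φ (c k) := by
    have hexpand (θ : ℝ) : exp (-n k * θ * I) * φ (F θ) =
        ∑ j ∈ s, exp (((n j - n k : ℤ) : ℂ) * θ * I) * φ (c j) := by
      simp only [F, map_sum, map_smul, smul_eq_mul, Finset.mul_sum]
      refine Finset.sum_congr rfl fun j _ ↦ ?_
      rw [← mul_assoc, ← Complex.exp_add]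
      push_cast
      ring_nf
    simp_rw [hexpand]
    rw [intervalIntegral.integral_finsetSum fun j _ ↦ by
      apply Continuous.intervalIntegrable; fun_prop]
    simp_rw [intervalIntegral.integral_mul_const, integral_exp_int_mul_I, sub_eq_zero]
    rw [Finset.sum_eq_single k (fun j hj hjk ↦ by simp [hn.ne hj hk hjk]) (absurd hk)]
    simp
  calc 2 * π * ‖c k‖ = ‖∫ θ in (-π)..π, exp (-n k * θ * I) * φ (F θ)‖ := by
        rw [hcoeff, hφk]
        simp [abs_of_pos pi_pos]
    _ ≤ ∫ θ in (-π)..π, ‖exp (-n k * θ * I) * φ (F θ)‖ :=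
        intervalIntegral.norm_integral_le_integral_norm hπ
    _ ≤ ∫ θ in (-π)..π, ‖F θ‖ := by
        refine intervalIntegral.integral_mono_on hπ
          (by apply Continuous.intervalIntegrable; fun_prop)
          (by apply Continuous.intervalIntegrable; fun_prop) fun θ _ ↦ ?_
        rw [norm_mul, Complex.norm_exp]
        simpa using φ.le_of_opNorm_le hφ (F θ)

theorem two_pi_mul_norm_rpow_le_integral_norm_sum_exp_rpow (hn : InjOn n s) (c : ι → E)
    (hk : k ∈ s) {q : ℝ} (hq : 1 ≤ q) :
    2 * π * ‖c k‖ ^ q ≤ ∫ θ in (-π)..π, ‖∑ j ∈ s, exp (n j * θ * I) • c j‖ ^ q := by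
  have h2π : 0 < 2 * π := two_pi_pos
  have hjensen := rpow_intervalIntegral_le (neg_lt_self pi_pos) hq
    (f := fun θ ↦ ‖∑ j ∈ s, exp (n j * θ * I) • c j‖) (by fun_prop) fun _ _ ↦ norm_nonneg _
  rw [sub_neg_eq_add, ← two_mul] at hjensen
  have hL1 := rpow_le_rpow (by positivity) (two_pi_mul_norm_le_integral_norm_sum_exp hn c hk)
    (by linarith : 0 ≤ q)
  refine le_of_mul_le_mul_left ?_ (rpow_pos_of_pos h2π (q - 1))
  calc (2 * π) ^ (q - 1) * (2 * π * ‖c k‖ ^ q) = (2 * π * ‖c k‖) ^ q := by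
        rw [mul_rpow h2π.le (norm_nonneg _), rpow_sub_one h2π.ne']
        field_simp
    _ ≤ _ := hL1.trans hjensen

end FourierCoefficient

section Polar

variable {E : Type*} [NormedAddCommGroup E] [NormedSpace ℝ E]

noncomputable def radialDensity (g : ℂ → E) (r : ℝ) : E :=
  r • ∫ θ in (-π)..π, g (r * exp (θ * I))

theorem integral_ball_eq_intervalIntegral_radialDensity [CompleteSpace E] {g : ℂ → E}
    (hg : Continuous g) {R : ℝ} (hR : 0 ≤ R) :
    ∫ z in Metric.ball (0 : ℂ) R, g z = ∫ r in 0..R, radialDensity g r := by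
  set P : ℝ × ℝ → ℂ := fun p ↦ p.1 * exp (p.2 * I)
  have hP : Continuous P := by fun_prop
  have hpolar : ⇑Complex.polarCoord.symm = P := funext fun p ↦ by
    simp only [Complex.polarCoord_symm_apply, P, exp_mul_I, ofReal_cos, ofReal_sin]
  have htarget : _root_.polarCoord.target ∩ P ⁻¹' Metric.ball 0 R = Ioo 0 R ×ˢ Ioo (-π) π := by
    ext ⟨r, θ⟩
    simp only [polarCoord_target, mem_inter_iff, mem_prod, mem_preimage, mem_ball_zero_iff,
      ← hpolar, Complex.norm_polarCoord_symm, mem_Ioi, mem_Ioo]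
    constructor
    · rintro ⟨⟨hr, hθ⟩, hrR⟩
      exact ⟨⟨hr, (abs_of_pos hr) ▸ hrR⟩, hθ⟩
    · rintro ⟨⟨hr, hrR⟩, hθ⟩
      exact ⟨⟨hr, hθ⟩, (abs_of_pos hr).symm ▸ hrR⟩
  have hint : IntegrableOn (fun p : ℝ × ℝ ↦ p.1 • g (P p)) (Ioo 0 R ×ˢ Ioo (-π) π) :=
    ((by fun_prop : Continuous fun p : ℝ × ℝ ↦ p.1 • g (P p)).continuousOn.integrableOn_compact
      (isCompact_Icc.prod isCompact_Icc)).mono_set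
      (prod_mono Ioo_subset_Icc_self Ioo_subset_Icc_self)
  calc ∫ z in Metric.ball (0 : ℂ) R, g z
      = ∫ p in _root_.polarCoord.target, p.1 • (Metric.ball 0 R).indicator g (P p) := by
        rw [← hpolar, Complex.integral_comp_polarCoord_symm, integral_indicator measurableSet_ball]
    _ = ∫ p in Ioo 0 R ×ˢ Ioo (-π) π, p.1 • g (P p) := by
        have hind (p : ℝ × ℝ) : p.1 • (Metric.ball 0 R).indicator g (P p) =
            (P ⁻¹' Metric.ball 0 R).indicator (fun p ↦ p.1 • g (P p)) p := by
          by_cases hp : P p ∈ Metric.ball 0 R <;> simp [hp]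
        simp_rw [hind]
        rw [setIntegral_indicator (measurableSet_ball.preimage hP.measurable), htarget]
    _ = ∫ r in Ioo 0 R, ∫ θ in Ioo (-π) π, r • g (r * exp (θ * I)) := by
        rw [Measure.volume_eq_prod]
        exact setIntegral_prod _ hint
    _ = ∫ r in 0..R, radialDensity g r := by
        simp_rw [radialDensity, intervalIntegral.integral_of_le hR,
          intervalIntegral.integral_of_le (neg_le_self pi_pos.le), integral_Ioc_eq_integral_Ioo,
          integral_smul]

theorem continuous_radialDensity {g : ℂ → E} (hg : Continuous g) :
    Continuous (radialDensity g) :=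
  continuous_id.smul (intervalIntegral.continuous_parametric_intervalIntegral_of_continuous'
    (f := fun r θ : ℝ ↦ g (r * exp (θ * I)))
    (hg.comp (by fun_prop : Continuous fun p : ℝ × ℝ ↦ (p.1 : ℂ) * exp (p.2 * I))) _ _)

theorem radialDensity_nonneg {g : ℂ → ℝ} {r : ℝ} (hr : 0 ≤ r)
    (hg : ∀ z ∈ Metric.sphere (0 : ℂ) r, 0 ≤ g z) : 0 ≤ radialDensity g r :=
  mul_nonneg hr (intervalIntegral.integral_nonneg (by linarith [pi_pos])
    fun θ _ ↦ hg _ (by simp [abs_of_nonneg hr]))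

end Polar

theorem sum_intervalIntegral_le_of_nonneg {h : ℝ → ℝ} {t : ℕ → ℝ} {a b : ℝ} (ht : Monotone t)
    (hat : a ≤ t 0) (htb : ∀ m, t m ≤ b) (hint : IntervalIntegrable h volume a b)
    (h0 : ∀ x ∈ Icc a b, 0 ≤ h x) (s : Finset ℕ) :
    ∑ m ∈ s, ∫ x in t m..t (m + 1), h x ≤ ∫ x in a..b, h x := by
  have hsub (m : ℕ) : Icc (t m) (t (m + 1)) ⊆ Icc a b :=
    Icc_subset_Icc (hat.trans (ht m.zero_le)) (htb _)
  have hint' (m : ℕ) : IntervalIntegrable h volume (t m) (t (m + 1)) := by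
    refine hint.mono_set ?_
    rw [uIcc_of_le (ht m.le_succ), uIcc_of_le (hat.trans (htb 0))]
    exact hsub m
  calc ∑ m ∈ s, ∫ x in t m..t (m + 1), h x
      ≤ ∑ m ∈ Finset.range (s.sup id).succ, ∫ x in t m..t (m + 1), h x :=
        Finset.sum_le_sum_of_subset_of_nonneg (Finset.subset_range_sup_succ s) fun m _ _ ↦
          intervalIntegral.integral_nonneg (ht m.le_succ) fun x hx ↦ h0 x (hsub m hx)
    _ = ∫ x in t 0..t (s.sup id).succ, h x :=
        intervalIntegral.sum_integral_adjacent_intervals fun m _ ↦ hint' m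
    _ ≤ ∫ x in a..b, h x :=
        intervalIntegral.integral_mono_interval hat (ht (Nat.zero_le _)) (htb _)
          (ae_restrict_of_forall_mem measurableSet_Ioc fun x hx ↦ h0 x (Ioc_subset_Icc_self hx))
          hint

theorem half_le_pow_two_pow {k : ℕ} {r : ℝ} (hr : 1 - (1 / 2) ^ (k + 1) ≤ r) :
    1 / 2 ≤ r ^ 2 ^ k := by
  have hδ : (2 : ℝ) ^ k * (1 / 2) ^ (k + 1) = 1 / 2 := by
    rw [pow_succ, ← mul_assoc, ← mul_pow]; norm_num
  have hδ' : (1 / 2 : ℝ) ^ (k + 1) ≤ 1 := pow_le_one₀ (by norm_num) (by norm_num)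
  calc (1 / 2 : ℝ) = 1 + (2 ^ k : ℕ) * -(1 / 2) ^ (k + 1) := by push_cast; linarith
    _ ≤ (1 + -(1 / 2) ^ (k + 1)) ^ 2 ^ k := one_add_mul_le_pow (by linarith) _
    _ ≤ r ^ 2 ^ k := pow_le_pow_left₀ (by linarith) (by linarith) _

theorem half_pow_rpow (m : ℕ) (q : ℝ) : ((1 / 2 : ℝ) ^ m) ^ q = 2 ^ (-(q * m)) := by
  rw [← rpow_natCast, ← rpow_mul (by norm_num), one_div, inv_rpow zero_le_two,
    rpow_neg zero_le_two, mul_comm]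

section Lacunary

variable {B : Type*} [NormedAddCommGroup B] [NormedSpace ℂ B]

noncomputable def lacunaryIntegrand (q : ℝ) (s : Finset ℕ) (a : ℕ → B) (z : ℂ) : ℝ :=
  (1 - ‖z‖) ^ (q - 1) * ‖∑ j ∈ s, z ^ 2 ^ j • a j‖ ^ q

variable {q : ℝ} {s : Finset ℕ} (a : ℕ → B)

theorem two_pi_mul_rpow_le_integral_norm_lacunary_rpow {k : ℕ} (hk : k ∈ s) (hq : 1 ≤ q)
    {r : ℝ} (hr : 0 ≤ r) :
    2 * π * (r ^ 2 ^ k * ‖a k‖) ^ q ≤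
      ∫ θ in (-π)..π, ‖∑ j ∈ s, (r * exp (θ * I)) ^ 2 ^ j • a j‖ ^ q := by
  have hinj : InjOn (fun j : ℕ ↦ ((2 ^ j : ℕ) : ℤ)) s :=
    (Nat.cast_injective.comp (Nat.pow_right_injective le_rfl)).injOn
  have hcoeff := two_pi_mul_norm_rpow_le_integral_norm_sum_exp_rpow hinj
    (fun j ↦ (r : ℂ) ^ 2 ^ j • a j) hk hq
  have hterm (θ : ℝ) (j : ℕ) : (r * exp (θ * I)) ^ 2 ^ j • a j =
      exp (((2 ^ j : ℕ) : ℤ) * θ * I) • (r : ℂ) ^ 2 ^ j • a j := by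
    rw [smul_smul, mul_pow, ← Complex.exp_nat_mul, mul_comm]
    push_cast
    ring_nf
  simpa [hterm, norm_smul, abs_of_nonneg hr] using hcoeff

theorem continuous_lacunaryIntegrand (hq : 1 ≤ q) : Continuous (lacunaryIntegrand q s a) :=
  ((continuous_rpow_const (by linarith)).comp (by fun_prop)).mul
    ((continuous_rpow_const (by linarith)).comp (by fun_prop))

theorem radialDensity_lacunaryIntegrand_nonneg {r : ℝ} (hr : r ∈ Icc 0 1) :
    0 ≤ radialDensity (lacunaryIntegrand q s a) r :=
  radialDensity_nonneg hr.1 fun z hz ↦ mul_nonneg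
    (rpow_nonneg (by linarith [mem_sphere_zero_iff_norm.mp hz, hr.2]) _)
    (rpow_nonneg (norm_nonneg _) _)

theorem le_radialDensity_lacunaryIntegrand {k : ℕ} (hk : k ∈ s) (hq : 1 ≤ q) {r : ℝ}
    (hr : r ∈ Icc (1 - (1 / 2) ^ (k + 1)) (1 - (1 / 2) ^ (k + 2))) :
    1 / 2 * ((1 / 2) ^ (k + 2)) ^ (q - 1) * (2 * π * (1 / 2 * ‖a k‖) ^ q) ≤
      radialDensity (lacunaryIntegrand q s a) r := by
  obtain ⟨hr₁, hr₂⟩ := hr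
  have hδ : (1 / 2 : ℝ) ^ (k + 1) ≤ 1 / 2 :=
    pow_le_of_le_one (by norm_num) (by norm_num) (by omega)
  have hr_half : 1 / 2 ≤ r := by linarith
  have hr_le_one : r ≤ 1 := hr₂.trans (sub_le_self _ (by positivity))
  have hnorm (θ : ℝ) : ‖(r : ℂ) * exp (θ * I)‖ = r := by
    simp [abs_of_nonneg (by linarith : 0 ≤ r)]
  simp_rw [radialDensity, lacunaryIntegrand, smul_eq_mul, hnorm,
    intervalIntegral.integral_const_mul, ← mul_assoc r]
  gcongr ?_ * ?_ * ?_
  · exact rpow_le_rpow (by positivity) (by linarith) (by linarith)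
  · refine le_trans ?_ (two_pi_mul_rpow_le_integral_norm_lacunary_rpow a hk hq (by linarith))
    gcongr
    exact half_le_pow_two_pow hr₁

theorem le_integral_annulus_radialDensity_lacunaryIntegrand {k : ℕ} (hk : k ∈ s) (hq : 1 ≤ q) :
    π * 2 ^ (-(3 * q)) * (2 ^ (-(q * k)) * ‖a k‖ ^ q) ≤
      ∫ r in (1 - (1 / 2) ^ (k + 1))..(1 - (1 / 2) ^ (k + 2)),
        radialDensity (lacunaryIntegrand q s a) r := by
  set x : ℝ := (1 / 2) ^ (k + 2)
  have hx : 0 < x := by positivity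
  have hwidth : 1 - (1 / 2 : ℝ) ^ (k + 1) ≤ 1 - x :=
    sub_le_sub_left (pow_le_pow_of_le_one (by norm_num) (by norm_num) (by omega)) 1
  calc π * 2 ^ (-(3 * q)) * (2 ^ (-(q * k)) * ‖a k‖ ^ q)
      = x * (1 / 2 * x ^ (q - 1) * (2 * π * (1 / 2 * ‖a k‖) ^ q)) := by
        have hpow : (2 : ℝ) ^ (-(3 * q)) * 2 ^ (-(q * k)) = 2 ^ (-(q * ↑(k + 2))) * 2 ^ (-q) := by
          rw [← rpow_add two_pos, ← rpow_add two_pos]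
          push_cast
          ring_nf
        rw [mul_rpow (by norm_num) (norm_nonneg _), rpow_sub_one hx.ne', half_pow_rpow, one_div,
          inv_rpow zero_le_two, ← rpow_neg zero_le_two]
        field_simp
        linear_combination ‖a k‖ ^ q * hpow
    _ = ∫ r in (1 - (1 / 2) ^ (k + 1))..(1 - x),
          1 / 2 * x ^ (q - 1) * (2 * π * (1 / 2 * ‖a k‖) ^ q) := by
        rw [intervalIntegral.integral_const, smul_eq_mul]
        congr 1
        simp only [x, pow_succ]
        ring
    _ ≤ _ := intervalIntegral.integral_mono_on hwidth intervalIntegrable_const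
        ((continuous_radialDensity (continuous_lacunaryIntegrand a hq)).intervalIntegrable _ _)
        fun r hr ↦ le_radialDensity_lacunaryIntegrand a hk hq hr

end Lacunary

/-- For `f(z) = Σ_{k=1}^N a_k z^{2^k}` with coefficients in a Banach space `B`,
`∫_D (1−|z|)^{q−1} ‖f(z)‖^q dA(z) ≥ c Σ_k 2^{−qk} ‖a_k‖^q` with `c = c(q) > 0`. -/
theorem lacunary_lower_estimate (q : ℝ) (hq : 1 < q) :
    ∃ c : ℝ, 0 < c ∧
      ∀ (B : Type) [NormedAddCommGroup B] [NormedSpace ℂ B] (N : ℕ) (a : ℕ → B),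
        c * ∑ k ∈ Finset.Icc 1 N, (2 : ℝ) ^ (-(q * k)) * ‖a k‖ ^ q ≤
          ∫ z in Metric.ball (0 : ℂ) 1,
            (1 - ‖z‖) ^ (q - 1) * ‖∑ k ∈ Finset.Icc 1 N, z ^ (2 ^ k) • a k‖ ^ q := by
  refine ⟨π * 2 ^ (-(3 * q)), by positivity, fun B _ _ N a ↦ ?_⟩
  have hg := continuous_lacunaryIntegrand (s := Finset.Icc 1 N) a hq.le
  have ht : Monotone fun m : ℕ ↦ 1 - (1 / 2 : ℝ) ^ (m + 1) := fun m m' hm ↦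
    sub_le_sub_left (pow_le_pow_of_le_one (by norm_num) (by norm_num) (by omega)) 1
  calc π * 2 ^ (-(3 * q)) * ∑ k ∈ Finset.Icc 1 N, (2 : ℝ) ^ (-(q * k)) * ‖a k‖ ^ q
      ≤ ∑ k ∈ Finset.Icc 1 N, ∫ r in (1 - (1 / 2) ^ (k + 1))..(1 - (1 / 2) ^ (k + 1 + 1)),
          radialDensity (lacunaryIntegrand q (Finset.Icc 1 N) a) r := by
        rw [Finset.mul_sum]
        exact Finset.sum_le_sum fun k hk ↦
          le_integral_annulus_radialDensity_lacunaryIntegrand a hk hq.le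
    _ ≤ ∫ r in (0 : ℝ)..1, radialDensity (lacunaryIntegrand q (Finset.Icc 1 N) a) r :=
        sum_intervalIntegral_le_of_nonneg ht (by norm_num) (fun m ↦ sub_le_self _ (by positivity))
          ((continuous_radialDensity hg).intervalIntegrable _ _)
          (fun r hr ↦ radialDensity_lacunaryIntegrand_nonneg a hr) _
    _ = _ := (integral_ball_eq_intervalIntegral_radialDensity hg zero_le_one).symm
end

section
/- Let a₁,...,a_N be elements of a Banach space B, 1 < q < ∞, and f(z) = Σ_k a_k z^{2^k}. Then there is a constant C depending only on q such that sup_{z₀∈D} ∫_D (1−|z|)^{q−1} ‖f(z)‖^q P_{z₀}(z) dA(z) ≤ C Σ_k 2^{−qk} ‖a_k‖^q, where P_{z₀}(z) = (1−|z₀|²)/|1−conj(z₀)z|². -/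
/-
Put `t = 1 - |z|` and `x_k = 2^k t`. Since `|z|^(2^k) ≤ exp (-x_k)`, Hölder's inequality with the
weights `v_k = min x_k x_k⁻¹`, whose sum over `k` is at most `4`, gives
`t^(q-1) ‖f z‖^q ≤ 4^(q-1) Σ_k ‖a_k‖^q 2^(-k(q-1)) (1 + x_k^(2(q-1))) exp (-x_k)`.
Every term depends on `z` only through `|z|`, so we integrate in polar coordinates. On the circle
of radius `r ≤ 1`, `P_{z₀}` is dominated by the Poisson kernel of the point `r z₀`, whose circle
average is `1`; the angular integral is therefore at most `2π`. The radial integral of the `k`-th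
term is at most `2^(-k) (1 + Γ(2q-1))`, so `C = 2π 4^(q-1) (1 + Γ(2q-1))` works.
-/

open MeasureTheory

/-- The Poisson-type weight `P_{z₀}(z) = (1−|z₀|²)/|1−conj(z₀)z|²`, extended to `z ∈ D`. -/
noncomputable def poissonWeight (z₀ z : ℂ) : ℝ :=
  (1 - ‖z₀‖ ^ 2) / ‖1 - (starRingEnd ℂ) z₀ * z‖ ^ 2

open Set Real Metric
open scoped ENNReal

theorem rpow_mul_min_inv_rpow_le (q : ℝ) {x : ℝ} (hx : 0 < x) :
    x ^ (q - 1) * min x x⁻¹ ^ (1 - q) ≤ 1 + x ^ (2 * (q - 1)) := by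
  have := rpow_nonneg hx.le (2 * (q - 1))
  rcases le_total x 1 with h | h
  · rw [min_eq_left (h.trans (one_le_inv₀ hx |>.2 h)), ← rpow_add hx,
      show q - 1 + (1 - q) = 0 by ring, rpow_zero]
    linarith
  · rw [min_eq_right ((inv_le_one_of_one_le₀ h).trans h), inv_rpow hx.le, ← rpow_neg hx.le,
      ← rpow_add hx, show q - 1 + -(1 - q) = 2 * (q - 1) by ring]
    linarith

theorem sum_min_two_pow_mul_inv_le_four (s : Finset ℕ) {t : ℝ} (ht : 0 < t) (ht1 : t ≤ 1) :
    ∑ k ∈ s, min (2 ^ k * t) (2 ^ k * t)⁻¹ ≤ 4 := by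
  -- Split at the `n` with `2 ^ n ≤ t⁻¹ < 2 ^ (n + 1)`: on either side the terms are geometric.
  obtain ⟨n, hn, hn'⟩ := exists_nat_pow_near (one_le_inv₀ ht |>.2 ht1) one_lt_two
  have hsmall : ∑ k ∈ s with k ≤ n, min (2 ^ k * t) (2 ^ k * t)⁻¹ ≤ 2 :=
    calc ∑ k ∈ s with k ≤ n, min (2 ^ k * t) (2 ^ k * t)⁻¹
        ≤ ∑ k ∈ Finset.range (n + 1), 2 ^ k * t := by
          refine (Finset.sum_le_sum fun k _ ↦ min_le_left _ _).trans
            (Finset.sum_le_sum_of_subset_of_nonneg (fun k hk ↦ ?_) fun k _ _ ↦ by positivity)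
          simpa [Nat.lt_succ_iff] using (Finset.mem_filter.1 hk).2
      _ = (2 ^ (n + 1) - 1) * t := by
          rw [← Finset.sum_mul, geom_sum_eq (by norm_num : (2 : ℝ) ≠ 1)]
          norm_num
      _ ≤ 2 * (t⁻¹ * t) := by rw [pow_succ]; nlinarith
      _ = 2 := by rw [inv_mul_cancel₀ ht.ne', mul_one]
  have hlarge : ∑ k ∈ s with ¬k ≤ n, min (2 ^ k * t) (2 ^ k * t)⁻¹ ≤ 2 :=
    calc ∑ k ∈ s with ¬k ≤ n, min (2 ^ k * t) (2 ^ k * t)⁻¹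
        ≤ ∑ k ∈ Finset.Ico (n + 1) (s.sup id + 1), t⁻¹ * (1 / 2) ^ k := by
          refine (Finset.sum_le_sum fun k _ ↦ (min_le_right _ _).trans_eq ?_).trans
            (Finset.sum_le_sum_of_subset_of_nonneg (fun k hk ↦ ?_) fun k _ _ ↦ by positivity)
          · rw [mul_inv, one_div, inv_pow, mul_comm]
          · have : k ≤ s.sup id := Finset.le_sup (f := id) (Finset.mem_filter.1 hk).1
            simp only [Finset.mem_filter, Finset.mem_Ico] at hk ⊢
            omega
      _ ≤ t⁻¹ * ((1 / 2) ^ (n + 1) / (1 - 1 / 2)) := by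
          rw [← Finset.mul_sum]
          gcongr
          exact geom_sum_Ico_le_of_lt_one (by norm_num) (by norm_num)
      _ = t⁻¹ / 2 ^ (n + 1) * 2 := by rw [one_div, inv_pow]; field_simp; norm_num
      _ ≤ 2 := by
          rw [div_mul_eq_mul_div, div_le_iff₀ (by positivity)]
          nlinarith
  rw [← Finset.sum_filter_add_sum_filter_not s (· ≤ n)]
  linarith

theorem rpow_sum_le_rpow_sum_weight_mul {ι : Type*} (s : Finset ι) {p : ℝ} (hp : 1 ≤ p)
    {w f : ι → ℝ} (hw : ∀ i, 0 < w i) (hf : ∀ i, 0 ≤ f i) :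
    (∑ i ∈ s, f i) ^ p ≤ (∑ i ∈ s, w i) ^ (p - 1) * ∑ i ∈ s, w i ^ (1 - p) * f i ^ p := by
  have hp0 : 0 < p := by linarith
  have hterm : ∀ i, w i * (f i / w i) ^ p = w i ^ (1 - p) * f i ^ p := fun i ↦ by
    rw [div_rpow (hf i) (hw i).le, rpow_sub (hw i), rpow_one]
    field_simp
  have holder := inner_le_weight_mul_Lp_of_nonneg s hp w (fun i ↦ f i / w i)
    (fun i ↦ (hw i).le) (fun i ↦ div_nonneg (hf i) (hw i).le)
  simp only [mul_div_cancel₀ _ (hw _).ne', hterm] at holder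
  calc (∑ i ∈ s, f i) ^ p
      ≤ ((∑ i ∈ s, w i) ^ (1 - p⁻¹) * (∑ i ∈ s, w i ^ (1 - p) * f i ^ p) ^ p⁻¹) ^ p :=
        rpow_le_rpow (Finset.sum_nonneg fun i _ ↦ hf i) holder hp0.le
    _ = (∑ i ∈ s, w i) ^ (p - 1) * ∑ i ∈ s, w i ^ (1 - p) * f i ^ p := by
        have hW : 0 ≤ ∑ i ∈ s, w i := Finset.sum_nonneg fun i _ ↦ (hw i).le
        have hS : 0 ≤ ∑ i ∈ s, w i ^ (1 - p) * f i ^ p := Finset.sum_nonneg fun i _ ↦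
          mul_nonneg (rpow_nonneg (hw i).le _) (rpow_nonneg (hf i) _)
        rw [mul_rpow (rpow_nonneg hW _) (rpow_nonneg hS _), ← rpow_mul hW, ← rpow_mul hS,
          inv_mul_cancel₀ hp0.ne', rpow_one, sub_mul, one_mul, inv_mul_cancel₀ hp0.ne']

theorem integrable_and_integral_le_of_lintegral_ofReal_le {α : Type*} [MeasurableSpace α]
    {μ : Measure α} {f : α → ℝ} (hf : AEStronglyMeasurable f μ) (hf0 : 0 ≤ᵐ[μ] f) {b : ℝ}
    (hb : 0 ≤ b) (h : ∫⁻ x, ENNReal.ofReal (f x) ∂μ ≤ ENNReal.ofReal b) :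
    Integrable f μ ∧ ∫ x, f x ∂μ ≤ b := by
  refine ⟨⟨hf, (hasFiniteIntegral_iff_ofReal hf0).2 (h.trans_lt ENNReal.ofReal_lt_top)⟩, ?_⟩
  rw [integral_eq_lintegral_of_nonneg_ae hf0 hf]
  exact ENNReal.toReal_le_of_le_ofReal hb h

noncomputable def polyExpNeg (p x : ℝ) : ℝ := (1 + x ^ p) * exp (-x)

theorem polyExpNeg_nonneg (p : ℝ) {x : ℝ} (hx : 0 ≤ x) : 0 ≤ polyExpNeg p x := by
  have := rpow_nonneg hx p
  unfold polyExpNeg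
  positivity

theorem integrableOn_exp_neg_mul_rpow {p : ℝ} (hp : -1 < p) :
    IntegrableOn (fun x ↦ exp (-x) * x ^ p) (Ioi 0) := by
  simpa using GammaIntegral_convergent (s := p + 1) (by linarith)

theorem integrableOn_polyExpNeg {p : ℝ} (hp : -1 < p) : IntegrableOn (polyExpNeg p) (Ioi 0) := by
  refine ((integrableOn_exp_neg_mul_rpow neg_one_lt_zero).add
    (integrableOn_exp_neg_mul_rpow hp)).congr_fun (fun x _ ↦ ?_) measurableSet_Ioi
  simp only [polyExpNeg, Pi.add_apply, rpow_zero]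
  ring

theorem integral_polyExpNeg {p : ℝ} (hp : -1 < p) :
    ∫ x in Ioi 0, polyExpNeg p x = 1 + Gamma (p + 1) := by
  have hexp : IntegrableOn (fun x ↦ exp (-x)) (Ioi 0) := by
    simpa using integrableOn_exp_neg_mul_rpow neg_one_lt_zero
  rw [Gamma_eq_integral (by linarith), add_sub_cancel_right, ← integral_exp_neg_Ioi_zero,
    ← integral_add hexp (integrableOn_exp_neg_mul_rpow hp)]
  refine setIntegral_congr_fun measurableSet_Ioi fun x _ ↦ ?_
  simp only [polyExpNeg]
  ring

theorem setLIntegral_Ioo_polyExpNeg_mul_le {p c : ℝ} (hp : -1 < p) (hc : 0 < c) :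
    ∫⁻ t in Ioo 0 1, ENNReal.ofReal (polyExpNeg p (c * t)) ≤
      ENNReal.ofReal (c⁻¹ * (1 + Gamma (p + 1))) := by
  have hint : IntegrableOn (fun t ↦ polyExpNeg p (c * t)) (Ioi 0) := by
    simpa using (integrableOn_Ioi_comp_mul_left_iff (polyExpNeg p) 0 hc).2
      (by simpa using integrableOn_polyExpNeg hp)
  calc ∫⁻ t in Ioo 0 1, ENNReal.ofReal (polyExpNeg p (c * t))
      ≤ ∫⁻ t in Ioi 0, ENNReal.ofReal (polyExpNeg p (c * t)) :=
        lintegral_mono_set Ioo_subset_Ioi_self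
    _ = ENNReal.ofReal (∫ t in Ioi 0, polyExpNeg p (c * t)) :=
        (ofReal_integral_eq_lintegral_ofReal hint (ae_restrict_of_forall_mem measurableSet_Ioi
          fun t (ht : 0 < t) ↦ polyExpNeg_nonneg p (by positivity))).symm
    _ = ENNReal.ofReal (c⁻¹ * (1 + Gamma (p + 1))) := by
        rw [integral_comp_mul_left_Ioi _ _ hc, mul_zero, integral_polyExpNeg hp, smul_eq_mul]

theorem lacunary_term_le {q : ℝ} (hq : 1 ≤ q) (k : ℕ) {c r : ℝ} (hc : 0 ≤ c) (hr0 : 0 ≤ r)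
    (hr1 : r < 1) :
    (1 - r) ^ (q - 1) * (min (2 ^ k * (1 - r)) (2 ^ k * (1 - r))⁻¹ ^ (1 - q) *
        (c * r ^ 2 ^ k) ^ q) ≤
      c ^ q * (2 ^ k) ^ (1 - q) * polyExpNeg (2 * (q - 1)) (2 ^ k * (1 - r)) := by
  set x : ℝ := 2 ^ k * (1 - r)
  have hx : 0 < x := by positivity
  have hρ : r ^ 2 ^ k ≤ exp (-x) := by
    have h := one_sub_div_pow_le_exp_neg (n := 2 ^ k) (t := x) (by push_cast; nlinarith)
    rwa [show 1 - x / ((2 ^ k : ℕ) : ℝ) = r by push_cast; field_simp; ring] at h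
  have hρq : (r ^ 2 ^ k) ^ q ≤ exp (-x) :=
    (rpow_le_self_of_le_one (by positivity) (pow_le_one₀ hr0 hr1.le) hq).trans hρ
  have ht : (1 - r) ^ (q - 1) = (2 ^ k) ^ (1 - q) * x ^ (q - 1) := by
    rw [mul_rpow (by positivity) (by linarith), ← mul_assoc, ← rpow_add (by positivity)]
    simp
  have hv := rpow_mul_min_inv_rpow_le q hx
  calc (1 - r) ^ (q - 1) * (min x x⁻¹ ^ (1 - q) * (c * r ^ 2 ^ k) ^ q)
      = c ^ q * (2 ^ k) ^ (1 - q) * ((x ^ (q - 1) * min x x⁻¹ ^ (1 - q)) * (r ^ 2 ^ k) ^ q) := by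
        rw [ht, mul_rpow hc (by positivity)]
        ring
    _ ≤ c ^ q * (2 ^ k) ^ (1 - q) * ((1 + x ^ (2 * (q - 1))) * exp (-x)) := by
        gcongr
    _ = c ^ q * (2 ^ k) ^ (1 - q) * polyExpNeg (2 * (q - 1)) x := rfl

theorem one_sub_norm_rpow_mul_norm_lacunary_rpow_le {B : Type*} [NormedAddCommGroup B]
    [NormedSpace ℂ B] {q : ℝ} (hq : 1 ≤ q) (s : Finset ℕ) (a : ℕ → B) {z : ℂ} (hz : ‖z‖ < 1) :
    (1 - ‖z‖) ^ (q - 1) * ‖∑ k ∈ s, z ^ 2 ^ k • a k‖ ^ q ≤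
      4 ^ (q - 1) * ∑ k ∈ s,
        ‖a k‖ ^ q * (2 ^ k) ^ (1 - q) * polyExpNeg (2 * (q - 1)) (2 ^ k * (1 - ‖z‖)) := by
  set r := ‖z‖
  have ht : 0 < 1 - r := by linarith
  set v : ℕ → ℝ := fun k ↦ min (2 ^ k * (1 - r)) (2 ^ k * (1 - r))⁻¹
  have hv : ∀ k, 0 < v k := fun k ↦ lt_min (by positivity) (by positivity)
  have hnorm : ‖∑ k ∈ s, z ^ 2 ^ k • a k‖ ≤ ∑ k ∈ s, ‖a k‖ * r ^ 2 ^ k :=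
    (norm_sum_le _ _).trans_eq (Finset.sum_congr rfl fun k _ ↦ by
      rw [norm_smul, norm_pow, mul_comm])
  calc (1 - r) ^ (q - 1) * ‖∑ k ∈ s, z ^ 2 ^ k • a k‖ ^ q
      ≤ (1 - r) ^ (q - 1) *
          ((∑ k ∈ s, v k) ^ (q - 1) * ∑ k ∈ s, v k ^ (1 - q) * (‖a k‖ * r ^ 2 ^ k) ^ q) := by
        gcongr
        exact (rpow_le_rpow (norm_nonneg _) hnorm (by linarith)).trans
          (rpow_sum_le_rpow_sum_weight_mul s hq hv fun k ↦ by positivity)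
    _ ≤ (1 - r) ^ (q - 1) *
          (4 ^ (q - 1) * ∑ k ∈ s, v k ^ (1 - q) * (‖a k‖ * r ^ 2 ^ k) ^ q) := by
        gcongr
        exact sum_min_two_pow_mul_inv_le_four s ht (by linarith [norm_nonneg z])
    _ = 4 ^ (q - 1) * ∑ k ∈ s, (1 - r) ^ (q - 1) * (v k ^ (1 - q) * (‖a k‖ * r ^ 2 ^ k) ^ q) := by
        rw [mul_left_comm, Finset.mul_sum]
    _ ≤ _ := by
        gcongr ?_ * ?_
        exact Finset.sum_le_sum fun k _ ↦ lacunary_term_le hq k (norm_nonneg _) (norm_nonneg _) hz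

theorem poissonWeight_nonneg {z₀ : ℂ} (hz₀ : ‖z₀‖ ≤ 1) (z : ℂ) : 0 ≤ poissonWeight z₀ z := by
  unfold poissonWeight
  have : ‖z₀‖ ^ 2 ≤ 1 := pow_le_one₀ (norm_nonneg _) hz₀
  exact div_nonneg (by linarith) (by positivity)

theorem measurable_poissonWeight (z₀ : ℂ) : Measurable (poissonWeight z₀) := by
  unfold poissonWeight
  fun_prop

theorem poissonWeight_circleMap_le_poissonKernel {z₀ : ℂ} {r : ℝ} (hr : |r| ≤ 1) (θ : ℝ) :
    poissonWeight z₀ (circleMap 0 r θ) ≤ poissonKernel 0 (r * z₀) (circleMap 0 1 θ) := by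
  set u := circleMap 0 1 θ
  have hu : ‖u‖ = 1 := by simp [u]
  have hden : ‖1 - starRingEnd ℂ z₀ * circleMap 0 r θ‖ = ‖u - r * z₀‖ := by
    have h1 : (1 : ℂ) = u * starRingEnd ℂ u := by
      rw [Complex.mul_conj, Complex.normSq_eq_norm_sq, hu]; norm_num
    have h2 : circleMap 0 r θ = r * u := by simp [u, circleMap]
    rw [h1, h2, show u * starRingEnd ℂ u - starRingEnd ℂ z₀ * (r * u)
      = u * starRingEnd ℂ (u - r * z₀) by simp; ring, norm_mul, hu, Complex.norm_conj, one_mul]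
  have hnum : 1 - ‖z₀‖ ^ 2 ≤ ‖u‖ ^ 2 - ‖(r : ℂ) * z₀‖ ^ 2 := by
    rw [hu, norm_mul, Complex.norm_real, Real.norm_eq_abs, mul_pow]
    have : |r| ^ 2 ≤ 1 := pow_le_one₀ (abs_nonneg r) hr
    nlinarith [sq_nonneg ‖z₀‖]
  rw [poissonWeight, poissonKernel, hden, sub_zero, sub_zero]
  exact div_le_div_of_nonneg_right (by simpa using hnum) (by positivity)

theorem circleAverage_poissonKernel {w : ℂ} (hw : ‖w‖ < 1) :
    circleAverage (poissonKernel 0 w) 0 1 = 1 := by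
  have := (InnerProductSpace.harmonicContOnCl_const (c := (1 : ℝ)) (s := ball (0 : ℂ) 1)
    ).circleAverage_poissonKernel_smul (c := 0) (w := w) (by simpa using hw)
  rwa [show poissonKernel 0 w • (fun _ ↦ (1 : ℝ)) = poissonKernel 0 w by ext; simp] at this

theorem lintegral_poissonWeight_circleMap_le {z₀ : ℂ} (hz₀ : ‖z₀‖ < 1) {r : ℝ} (hr : |r| ≤ 1) :
    ∫⁻ θ in Ioo (-π) π, ENNReal.ofReal (poissonWeight z₀ (circleMap 0 r θ)) ≤
      ENNReal.ofReal (2 * π) := by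
  set w : ℂ := r * z₀
  have hw : ‖w‖ < 1 := by
    rw [norm_mul, Complex.norm_real, Real.norm_eq_abs]
    nlinarith [abs_nonneg r, norm_nonneg z₀]
  have havg := circleAverage_poissonKernel hw
  have hK : CircleIntegrable (poissonKernel 0 w) 0 1 := by
    by_contra h
    rw [circleAverage.integral_undef h] at havg
    exact zero_ne_one havg
  have hper : Function.Periodic (fun θ ↦ poissonKernel 0 w (circleMap 0 1 θ)) (2 * π) :=
    (periodic_circleMap 0 1).comp (poissonKernel 0 w)
  have hK' : IntervalIntegrable (fun θ ↦ poissonKernel 0 w (circleMap 0 1 θ)) volume (-π) π :=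
    hper.intervalIntegrable₀ two_pi_pos.ne' hK _ _
  have hle : ∀ θ, poissonWeight z₀ (circleMap 0 r θ) ≤ poissonKernel 0 w (circleMap 0 1 θ) :=
    poissonWeight_circleMap_le_poissonKernel hr
  calc ∫⁻ θ in Ioo (-π) π, ENNReal.ofReal (poissonWeight z₀ (circleMap 0 r θ))
      ≤ ∫⁻ θ in Ioo (-π) π, ENNReal.ofReal (poissonKernel 0 w (circleMap 0 1 θ)) :=
        lintegral_mono fun θ ↦ ENNReal.ofReal_le_ofReal (hle θ)
    _ = ENNReal.ofReal (∫ θ in Ioo (-π) π, poissonKernel 0 w (circleMap 0 1 θ)) :=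
        (ofReal_integral_eq_lintegral_ofReal
          ((intervalIntegrable_iff_integrableOn_Ioo_of_le (by linarith [pi_pos])).1 hK')
          (ae_of_all _ fun θ ↦ (poissonWeight_nonneg hz₀.le _).trans (hle θ))).symm
    _ = ENNReal.ofReal (2 * π) := by
      have hshift := hper.intervalIntegral_add_eq (-π) 0
      rw [show -π + 2 * π = π by ring, zero_add] at hshift
      rw [← integral_Ioc_eq_integral_Ioo, ← intervalIntegral.integral_of_le (by linarith [pi_pos]),
        hshift]
      rw [circleAverage_def, smul_eq_mul] at havg
      congr 1
      field_simp at havg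
      simpa using havg

theorem polarCoord_symm_eq_circleMap (r θ : ℝ) :
    Complex.polarCoord.symm (r, θ) = circleMap 0 r θ := by
  simp [Complex.polarCoord_symm_apply, circleMap, Complex.exp_mul_I]

theorem setLIntegral_Ioo_comp_one_sub (φ : ℝ → ℝ≥0∞) (hφ : Measurable φ) :
    ∫⁻ r in Ioo 0 1, φ (1 - r) = ∫⁻ t in Ioo 0 1, φ t := by
  have := (Measure.measurePreserving_sub_left volume (1 : ℝ)).setLIntegral_comp_preimage
    measurableSet_Ioo hφ (s := Ioo 0 1)
  simpa using this

theorem lintegral_circleMap_indicator_ball_le (φ : ℝ → ℝ≥0∞) {z₀ : ℂ} (hz₀ : ‖z₀‖ < 1) {r : ℝ}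
    (hr : 0 < r) :
    ∫⁻ θ in Ioo (-π) π, ENNReal.ofReal r • (ball (0 : ℂ) 1).indicator
        (fun z ↦ φ (1 - ‖z‖) * ENNReal.ofReal (poissonWeight z₀ z)) (circleMap 0 r θ) ≤
      (Iio 1).indicator (fun r ↦ ENNReal.ofReal (2 * π) * φ (1 - r)) r := by
  have hnorm : ∀ θ, ‖circleMap 0 r θ‖ = r := fun θ ↦ by simp [hr.le]
  by_cases hr1 : r < 1
  · have hmem : ∀ θ, circleMap 0 r θ ∈ ball (0 : ℂ) 1 := fun θ ↦ by simpa [hnorm θ] using hr1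
    simp only [indicator_of_mem (hmem _), indicator_of_mem (show r ∈ Iio 1 from hr1), hnorm,
      smul_eq_mul]
    rw [lintegral_const_mul' _ _ ENNReal.ofReal_ne_top,
      lintegral_const_mul _ (by have := measurable_poissonWeight z₀; fun_prop)]
    calc ENNReal.ofReal r * (φ (1 - r) * ∫⁻ θ in Ioo (-π) π,
          ENNReal.ofReal (poissonWeight z₀ (circleMap 0 r θ)))
        ≤ 1 * (φ (1 - r) * ENNReal.ofReal (2 * π)) := by
          gcongr
          · exact ENNReal.ofReal_le_one.2 hr1.le
          · exact lintegral_poissonWeight_circleMap_le hz₀ (by rw [abs_of_pos hr]; exact hr1.le)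
      _ = ENNReal.ofReal (2 * π) * φ (1 - r) := by rw [one_mul, mul_comm]
  · have hout : ∀ θ, circleMap 0 r θ ∉ ball (0 : ℂ) 1 := fun θ ↦ by simpa [hnorm θ] using hr1
    simp [indicator_of_notMem (hout _)]

theorem lintegral_ball_radial_mul_poissonWeight_le (φ : ℝ → ℝ≥0∞) (hφ : Measurable φ)
    {z₀ : ℂ} (hz₀ : ‖z₀‖ < 1) :
    ∫⁻ z in ball (0 : ℂ) 1, φ (1 - ‖z‖) * ENNReal.ofReal (poissonWeight z₀ z) ≤
      ENNReal.ofReal (2 * π) * ∫⁻ t in Ioo 0 1, φ t := by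
  set g : ℂ → ℝ≥0∞ := fun z ↦ φ (1 - ‖z‖) * ENNReal.ofReal (poissonWeight z₀ z)
  have hg : Measurable g := by
    have := measurable_poissonWeight z₀
    fun_prop
  calc ∫⁻ z in ball (0 : ℂ) 1, g z
      = ∫⁻ p in Ioi 0 ×ˢ Ioo (-π) π,
          ENNReal.ofReal p.1 • (ball (0 : ℂ) 1).indicator g (Complex.polarCoord.symm p) := by
        rw [← lintegral_indicator measurableSet_ball]
        exact (Complex.lintegral_comp_polarCoord_symm _).symm
    _ = ∫⁻ r in Ioi 0, ∫⁻ θ in Ioo (-π) π,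
          ENNReal.ofReal r • (ball (0 : ℂ) 1).indicator g (circleMap 0 r θ) := by
        rw [Measure.volume_eq_prod, setLIntegral_prod]
        · simp only [polarCoord_symm_eq_circleMap]
        · have : Continuous fun p : ℝ × ℝ ↦ Complex.polarCoord.symm p := by
            simp only [Complex.polarCoord_symm_apply]
            fun_prop
          exact (measurable_fst.ennreal_ofReal.smul
            ((hg.indicator measurableSet_ball).comp this.measurable)).aemeasurable
    _ ≤ ∫⁻ r in Ioi 0, (Iio 1).indicator (fun r ↦ ENNReal.ofReal (2 * π) * φ (1 - r)) r :=
        setLIntegral_mono ((by fun_prop : Measurable _).indicator measurableSet_Iio)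
          fun r hr ↦ lintegral_circleMap_indicator_ball_le φ hz₀ hr
    _ = ENNReal.ofReal (2 * π) * ∫⁻ t in Ioo 0 1, φ t := by
        rw [lintegral_indicator measurableSet_Iio, Measure.restrict_restrict measurableSet_Iio,
          Iio_inter_Ioi, lintegral_const_mul _ (by fun_prop), setLIntegral_Ioo_comp_one_sub φ hφ]

theorem integrableOn_polyExpNeg_mul_poissonWeight_and_integral_le {p c : ℝ} (hp : -1 < p)
    (hc : 0 < c) {z₀ : ℂ} (hz₀ : ‖z₀‖ < 1) :
    IntegrableOn (fun z ↦ polyExpNeg p (c * (1 - ‖z‖)) * poissonWeight z₀ z) (ball 0 1) ∧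
      ∫ z in ball 0 1, polyExpNeg p (c * (1 - ‖z‖)) * poissonWeight z₀ z ≤
        2 * π * (c⁻¹ * (1 + Gamma (p + 1))) := by
  have hmeas : Measurable (polyExpNeg p) := by unfold polyExpNeg; fun_prop
  have := Gamma_pos_of_pos (by linarith : 0 < p + 1)
  refine integrable_and_integral_le_of_lintegral_ofReal_le ?_ ?_ (by positivity) ?_
  · have := measurable_poissonWeight z₀
    exact Measurable.aestronglyMeasurable (by fun_prop)
  · refine ae_restrict_of_forall_mem measurableSet_ball fun z hz ↦ ?_
    have : ‖z‖ < 1 := mem_ball_zero_iff.1 hz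
    exact mul_nonneg (polyExpNeg_nonneg p (by nlinarith)) (poissonWeight_nonneg hz₀.le z)
  calc ∫⁻ z in ball 0 1, ENNReal.ofReal (polyExpNeg p (c * (1 - ‖z‖)) * poissonWeight z₀ z)
      = ∫⁻ z in ball 0 1, ENNReal.ofReal (polyExpNeg p (c * (1 - ‖z‖))) *
          ENNReal.ofReal (poissonWeight z₀ z) := by
        refine setLIntegral_congr_fun measurableSet_ball fun z hz ↦ ENNReal.ofReal_mul ?_
        have : ‖z‖ < 1 := mem_ball_zero_iff.1 hz
        exact polyExpNeg_nonneg p (by nlinarith)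
    _ ≤ ENNReal.ofReal (2 * π) * ∫⁻ t in Ioo 0 1, ENNReal.ofReal (polyExpNeg p (c * t)) :=
        lintegral_ball_radial_mul_poissonWeight_le (fun t ↦ ENNReal.ofReal (polyExpNeg p (c * t)))
          (by fun_prop) hz₀
    _ ≤ ENNReal.ofReal (2 * π) * ENNReal.ofReal (c⁻¹ * (1 + Gamma (p + 1))) := by
        gcongr
        exact setLIntegral_Ioo_polyExpNeg_mul_le hp hc
    _ = ENNReal.ofReal (2 * π * (c⁻¹ * (1 + Gamma (p + 1)))) :=
        (ENNReal.ofReal_mul (by positivity)).symm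

theorem setIntegral_ball_lacunary_le {B : Type*} [NormedAddCommGroup B] [NormedSpace ℂ B]
    {q : ℝ} (hq : 1 ≤ q) (s : Finset ℕ) (a : ℕ → B) {z₀ : ℂ} (hz₀ : ‖z₀‖ < 1) :
    ∫ z in ball 0 1, (1 - ‖z‖) ^ (q - 1) * ‖∑ k ∈ s, z ^ 2 ^ k • a k‖ ^ q * poissonWeight z₀ z ≤
      2 * π * 4 ^ (q - 1) * (1 + Gamma (2 * (q - 1) + 1)) *
        ∑ k ∈ s, (2 : ℝ) ^ (-(q * k)) * ‖a k‖ ^ q := by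
  have hp : -1 < 2 * (q - 1) := by linarith
  set g : ℕ → ℂ → ℝ := fun k z ↦
    polyExpNeg (2 * (q - 1)) (2 ^ k * (1 - ‖z‖)) * poissonWeight z₀ z
  have hg (k : ℕ) : IntegrableOn (g k) (ball 0 1) ∧
      ∫ z in ball 0 1, g k z ≤ 2 * π * (((2 : ℝ) ^ k)⁻¹ * (1 + Gamma (2 * (q - 1) + 1))) :=
    integrableOn_polyExpNeg_mul_poissonWeight_and_integral_le hp (pow_pos two_pos k) hz₀
  have hpow (k : ℕ) : ((2 : ℝ) ^ k) ^ (1 - q) * ((2 : ℝ) ^ k)⁻¹ = 2 ^ (-(q * k)) := by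
    rw [← rpow_neg_one, ← rpow_add (by positivity), ← rpow_natCast, ← rpow_mul zero_le_two]
    ring_nf
  calc _ ≤ ∫ z in ball 0 1, 4 ^ (q - 1) * ∑ k ∈ s, ‖a k‖ ^ q * (2 ^ k) ^ (1 - q) * g k z := by
        refine integral_mono_of_nonneg (ae_restrict_of_forall_mem measurableSet_ball fun z hz ↦ ?_)
          ((integrable_finsetSum _ fun k _ ↦ (hg k).1.const_mul _).const_mul _)
          (ae_restrict_of_forall_mem measurableSet_ball fun z hz ↦ ?_)
        · have : ‖z‖ < 1 := mem_ball_zero_iff.1 hz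
          exact mul_nonneg (mul_nonneg (rpow_nonneg (by linarith) _) (by positivity))
            (poissonWeight_nonneg hz₀.le z)
        · have := mul_le_mul_of_nonneg_right (one_sub_norm_rpow_mul_norm_lacunary_rpow_le hq s
            a (mem_ball_zero_iff.1 hz)) (poissonWeight_nonneg hz₀.le z)
          simpa only [g, Finset.sum_mul, mul_assoc] using this
    _ = 4 ^ (q - 1) * ∑ k ∈ s, ‖a k‖ ^ q * (2 ^ k) ^ (1 - q) * ∫ z in ball 0 1, g k z := by
        rw [integral_const_mul, integral_finsetSum _ fun k _ ↦ (hg k).1.const_mul _]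
        simp only [integral_const_mul]
    _ ≤ 4 ^ (q - 1) * ∑ k ∈ s, ‖a k‖ ^ q * (2 ^ k) ^ (1 - q) *
          (2 * π * (((2 : ℝ) ^ k)⁻¹ * (1 + Gamma (2 * (q - 1) + 1)))) := by
        gcongr with k
        exact (hg k).2
    _ = _ := by
        rw [Finset.mul_sum, Finset.mul_sum]
        refine Finset.sum_congr rfl fun k _ ↦ ?_
        rw [← hpow]
        ring

/-- For `f(z) = Σ_{k=1}^N a_k z^{2^k}`,
`sup_{z₀∈D} ∫_D (1−|z|)^{q−1} ‖f(z)‖^q P_{z₀}(z) dA(z) ≤ C Σ_k 2^{−qk} ‖a_k‖^q`. -/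
theorem lacunary_upper_estimate (q : ℝ) (hq : 1 < q) :
    ∃ C : ℝ, 0 < C ∧
      ∀ (B : Type) [NormedAddCommGroup B] [NormedSpace ℂ B] (N : ℕ) (a : ℕ → B),
        ∀ z₀ ∈ Metric.ball (0 : ℂ) 1,
          (∫ z in Metric.ball (0 : ℂ) 1,
              (1 - ‖z‖) ^ (q - 1) *
                ‖∑ k ∈ Finset.Icc 1 N, z ^ (2 ^ k) • a k‖ ^ q * poissonWeight z₀ z) ≤
            C * ∑ k ∈ Finset.Icc 1 N, (2 : ℝ) ^ (-(q * k)) * ‖a k‖ ^ q := by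
  have := Gamma_pos_of_pos (by linarith : 0 < 2 * (q - 1) + 1)
  exact ⟨2 * π * 4 ^ (q - 1) * (1 + Gamma (2 * (q - 1) + 1)), by positivity,
    fun B _ _ N a z₀ hz₀ ↦ setIntegral_ball_lacunary_le hq.le _ a (mem_ball_zero_iff.1 hz₀)⟩
end
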